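/- arXiv:2101.10685 — 3 statements merged into one kernel-verified Lean document; each statement's English description precedes it below -/
import Mathlib

section
/- For every game G and every ε ≥ 0, the negotiation function has a least ε-fixed point: there exists an ε-fixed point λ* of nego such that λ*(v) ≤ λ(v) for every vertex v and every ε-fixed point λ of nego. -/
noncomputable section

open Filter

/-- Prepend a finite list to an infinite sequence. -/
def prependList {V : Type} (h : List V) (ρ : ℕ → V) : ℕ → V :=
  fun n => if hn : n < h.length then h.get ⟨n, hn⟩ else ρ (n - h.length)

/-- A (turn-based, multiplayer) game on a graph: a finite directed graph `(V, E)`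
in which every vertex has an outgoing edge, a partition of the vertices among the
players (given by `control`), and an outcome function `payoff : Π → V^ω → ℝ`. -/
structure GameStruct (P V : Type) where
  E : V → V → Prop
  total : ∀ v, ∃ w, E v w
  control : V → P
  payoff : P → (ℕ → V) → ℝ

namespace GameStruct

variable {P V : Type}

/-- A strategy: given the history before the current vertex and the current vertex,
choose a successor along an edge. -/
structure Strategy (G : GameStruct P V) where
  toFun : List V → V → V
  valid : ∀ h v, G.E v (toFun h v)

/-- A complete strategy profile. -/
abbrev Profile (G : GameStruct P V) := P → G.Strategy

def step (G : GameStruct P V) (σ : G.Profile) (p : List V × V) : List V × V :=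
  (p.1 ++ [p.2], (σ (G.control p.2)).toFun p.1 p.2)

/-- The play induced by the profile `σ` from vertex `v`, after the past history `h`. -/
def play (G : GameStruct P V) (σ : G.Profile) (h : List V) (v : V) : ℕ → V :=
  fun n => ((G.step σ)^[n] (h, v)).2

/-- An infinite path in the graph. -/
def IsPlay (G : GameStruct P V) (ρ : ℕ → V) : Prop := ∀ n, G.E (ρ n) (ρ (n + 1))

def IsPlayFrom (G : GameStruct P V) (v₀ : V) (ρ : ℕ → V) : Prop := ρ 0 = v₀ ∧ G.IsPlay ρ

/-- A history: a finite nonempty path. -/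
def IsHist (G : GameStruct P V) (H : List V) : Prop := H ≠ [] ∧ List.Chain' G.E H

/-- `hv` is a history of the initialized game `G_{∥v₀}` (here `h` is the part strictly
before the last vertex `v`; it may be empty, in which case `v = v₀`). -/
def IsHistFrom (G : GameStruct P V) (v₀ : V) (h : List V) (v : V) : Prop :=
  List.Chain' G.E (h ++ [v]) ∧ (h ++ [v]).head? = some v₀

/-- The (finite) history `H` is compatible with the strategy `σ` of player `j`. -/
def CompatList (G : GameStruct P V) (σ : G.Strategy) (j : P) (H : List V) : Prop :=
  ∀ k u w, H[k]? = some u → H[k + 1]? = some w → G.control u = j →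
    w = σ.toFun (H.take k) u

/-- The history `H` is compatible with `σ̄_{-i}`, i.e. with every strategy of the
profile except possibly that of player `i`. -/
def CompatExcept (G : GameStruct P V) (i : P) (σ : G.Profile) (H : List V) : Prop :=
  ∀ j, j ≠ i → G.CompatList (σ j) j H

/-- A play `ρ` is `l`-consistent for the requirement `l : V → ℝ ∪ {±∞}`. -/
def Consistent (G : GameStruct P V) (l : V → EReal) (ρ : ℕ → V) : Prop :=
  ∀ n, l (ρ n) ≤ (G.payoff (G.control (ρ n)) (fun k => ρ (n + k)) : EReal)

variable [DecidableEq P]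

/-- The set of `l`-rational strategy profiles (for the players other than `i`) from `v`.
A profile is identified with a complete profile whose `i`-component is irrelevant. -/
def LamRat (G : GameStruct P V) (l : V → EReal) (i : P) (v : V) : Set G.Profile :=
  { σ | ∃ σi : G.Strategy, ∀ h w, G.IsHistFrom v h w → G.CompatExcept i σ (h ++ [w]) →
      G.Consistent l (G.play (Function.update σ i σi) h w) }

/-- `sup_{σ_i} μ_i(⟨σ̄_{-i}, σ_i⟩_v)`. -/
def valAgainst (G : GameStruct P V) (i : P) (σ : G.Profile) (v : V) : EReal :=
  ⨆ σi : G.Strategy, (G.payoff i (G.play (Function.update σ i σi) [] v) : EReal)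

/-- The negotiation function, with the convention `inf ∅ = +∞`. -/
def nego (G : GameStruct P V) (l : V → EReal) : V → EReal :=
  fun v => ⨅ σ ∈ G.LamRat l (G.control v) v, G.valAgainst (G.control v) σ v

/-- A game with steady negotiation. -/
def SteadyNego (G : GameStruct P V) : Prop :=
  ∀ (i : P) (v : V) (l : V → EReal),
    G.LamRat l i v = ∅ ∨
      ∃ σ ∈ G.LamRat l i v, ∀ τ ∈ G.LamRat l i v, G.valAgainst i σ v ≤ G.valAgainst i τ v

/-- Nash equilibrium in `G_{∥v₀}`. -/
def IsNE (G : GameStruct P V) (v₀ : V) (σ : G.Profile) : Prop :=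
  ∀ (i : P) (σ' : G.Strategy),
    G.payoff i (G.play (Function.update σ i σ') [] v₀) ≤ G.payoff i (G.play σ [] v₀)

/-- `ε`-subgame-perfect equilibrium in `G_{∥v₀}`. -/
def IsEpsSPE (G : GameStruct P V) (v₀ : V) (ε : ℝ) (σ : G.Profile) : Prop :=
  ∀ h v, G.IsHistFrom v₀ h v → ∀ (i : P) (σ' : G.Strategy),
    G.payoff i (prependList h (G.play (Function.update σ i σ') h v)) ≤
      G.payoff i (prependList h (G.play σ h v)) + ε

/-- `l` is an `ε`-fixed point of the negotiation function (`±∞` is within `ε` of itself). -/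
def IsEFix (G : GameStruct P V) (ε : ℝ) (l : V → EReal) : Prop :=
  ∀ v, l v - (ε : EReal) ≤ G.nego l v ∧ G.nego l v ≤ l v + (ε : EReal)

/-- Prefix-independent game. -/
def PrefixIndependent (G : GameStruct P V) : Prop :=
  ∀ (h : List V) (ρ : ℕ → V), G.IsHist h → G.IsPlay ρ → ∀ i,
    G.payoff i (prependList h ρ) = G.payoff i ρ

/-- Well-initialized game: every vertex is reachable from `v₀`. -/
def WellInit (G : GameStruct P V) (v₀ : V) : Prop :=
  ∀ v, Relation.ReflTransGen G.E v₀ v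

/-- `G` is the mean-payoff game given by the weight function `π`. -/
def IsMeanPayoff (G : GameStruct P V) (π : P → V → V → ℚ) : Prop :=
  ∀ i ρ, G.payoff i ρ =
    Filter.liminf
      (fun n : ℕ => (∑ k ∈ Finset.range n, (π i (ρ k) (ρ (k + 1)) : ℝ)) / n)
      Filter.atTop

end GameStruct

/-!
The negotiation function is monotone, so by Knaster–Tarski the map `λ ↦ nego λ - ε` on the
complete lattice `V → EReal` has a least fixed point `λ*`. Every `ε`-fixed point `λ` satisfies
`nego λ - ε ≤ λ`, hence lies above `λ*`; and `λ*` is itself an `ε`-fixed point, because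
`λ* = nego λ* - ε` gives both `nego λ* = λ* + ε` and `λ* - ε ≤ λ* ≤ nego λ*`.
-/

namespace EReal

lemma sub_coe_le_iff_le_add_coe {x y : EReal} {ε : ℝ} : x - ε ≤ y ↔ x ≤ y + ε :=
  sub_le_iff_le_add (.inl (coe_ne_bot ε)) (.inl (coe_ne_top ε))

lemma sub_coe_le_self {x : EReal} {ε : ℝ} (hε : 0 ≤ ε) : x - ε ≤ x :=
  sub_coe_le_iff_le_add_coe.mpr (le_add_of_nonneg_right (by exact_mod_cast hε))

end EReal

theorem exists_least_eps_fixed_point_of_monotone {ι : Type*} {g : (ι → EReal) → ι → EReal}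
    (hg : Monotone g) {ε : ℝ} (hε : 0 ≤ ε) :
    ∃ x : ι → EReal, (∀ i, x i - ε ≤ g x i ∧ g x i ≤ x i + ε) ∧
      ∀ y : ι → EReal, (∀ i, y i - ε ≤ g y i ∧ g y i ≤ y i + ε) → ∀ i, x i ≤ y i := by
  let f : (ι → EReal) →o (ι → EReal) :=
    ⟨fun x i => g x i - ε, fun _ _ h i => EReal.sub_le_sub (hg h i) le_rfl⟩
  have hfix (i : ι) : g f.lfp i - ε = f.lfp i := congrFun f.map_lfp i
  refine ⟨f.lfp, fun i => ⟨?_, ?_⟩, fun y hy => f.lfp_le fun i => ?_⟩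
  · calc f.lfp i - ε ≤ f.lfp i := EReal.sub_coe_le_self hε
      _ = g f.lfp i - ε := (hfix i).symm
      _ ≤ g f.lfp i := EReal.sub_coe_le_self hε
  · exact EReal.sub_coe_le_iff_le_add_coe.mp (hfix i).le
  · exact EReal.sub_coe_le_iff_le_add_coe.mpr (hy i).2

namespace GameStruct

lemma nego_mono {P V : Type} [DecidableEq P] (G : GameStruct P V) : Monotone G.nego := by
  intro l l' hl v
  refine le_iInf₂ fun σ ⟨σi, hσi⟩ => iInf₂_le σ ?_
  exact ⟨σi, fun h w hw hc n => (hl _).trans (hσi h w hw hc n)⟩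

end GameStruct

open GameStruct in
theorem exists_least_eps_fixed_point_general
    {P V : Type} [DecidableEq P]
    (G : GameStruct P V) (ε : ℝ) (hε : 0 ≤ ε) :
    ∃ lstar : V → EReal, G.IsEFix ε lstar ∧
      ∀ l : V → EReal, G.IsEFix ε l → ∀ v, lstar v ≤ l v :=
  exists_least_eps_fixed_point_of_monotone G.nego_mono hε

open GameStruct in
/-- For every game and every `ε ≥ 0`, the negotiation function has a
least `ε`-fixed point. -/
theorem exists_least_eps_fixed_point
    {P V : Type} [Fintype P] [Fintype V] [DecidableEq P]
    (G : GameStruct P V) (ε : ℝ) (hε : 0 ≤ ε) :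
    ∃ lstar : V → EReal, G.IsEFix ε lstar ∧
      ∀ l : V → EReal, G.IsEFix ε l → ∀ v, lstar v ≤ l v :=
  exists_least_eps_fixed_point_general G ε hε
end
end

section
/- Let G_{∥v₀} be an initialized prefix-independent game, let ε ≥ 0, and let λ* be the least ε-fixed point of the negotiation function. If ξ is a play starting at v₀ and there exists an ε-SPE σ̄ in G_{∥v₀} with ⟨σ̄⟩_{v₀} = ξ, then ξ is λ*-consistent. -/
noncomputable section

open Filter

/-!
Every play `ξ` of an `ε`-SPE `σ` is consistent with the requirement `λ̂` sending `v` to the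
least payoff its controller gets from `σ` after some history ending in `v`. It suffices to
show that `λ̂` is an `ε`-fixed point of `nego`, for then `λ* ≤ λ̂`. Since every `λ̂`-rational
profile lets the player at `v` secure `λ̂ v`, we have `λ̂ ≤ nego λ̂`. Conversely, after any
history `hv` the remainder of `σ` is `λ̂`-rational from `v`, and by `ε`-perfection and
prefix-independence no deviation from it gains more than `ε` over `⟨σ_{∥hv}⟩_v`, whence
`nego λ̂ ≤ λ̂ + ε`.
-/

namespace GameStruct

variable {P V : Type} {G : GameStruct P V}

lemma isHistFrom_nil (v : V) : G.IsHistFrom v [] v :=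
  ⟨List.isChain_singleton _, rfl⟩

lemma isHistFrom_snoc_iff {v₀ u w : V} {h : List V} :
    G.IsHistFrom v₀ (h ++ [u]) w ↔ G.IsHistFrom v₀ h u ∧ G.E u w := by
  have hhead : (h ++ [u] ++ [w]).head? = (h ++ [u]).head? := by cases h <;> rfl
  change List.IsChain G.E (h ++ [u] ++ [w]) ∧ _ ↔ (List.IsChain G.E (h ++ [u]) ∧ _) ∧ _
  rw [List.isChain_append (l₁ := h ++ [u]), hhead]
  simp only [List.getLast?_concat, List.isChain_singleton, List.head?_cons, Option.mem_def,
    Option.some.injEq, forall_eq', true_and]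
  tauto

lemma IsHistFrom.chain {v₀ v : V} {h : List V} (hh : G.IsHistFrom v₀ h v) :
    List.IsChain G.E h :=
  (List.isChain_append.1 hh.1).1

lemma IsHistFrom.append {v₀ v w : V} {h h' : List V} (hh : G.IsHistFrom v₀ h v)
    (hh' : G.IsHistFrom v h' w) : G.IsHistFrom v₀ (h ++ h') w := by
  induction h' using List.reverseRecOn generalizing w with
  | nil =>
    obtain rfl : w = v := by simpa [IsHistFrom] using hh'.2
    simpa using hh
  | append_singleton h' u ih =>
    obtain ⟨hh', huw⟩ := isHistFrom_snoc_iff.1 hh'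
    rw [← List.append_assoc]
    exact isHistFrom_snoc_iff.2 ⟨ih hh', huw⟩

lemma isPlay_play (σ : G.Profile) (h : List V) (v : V) : G.IsPlay (G.play σ h v) := by
  intro n
  simp only [play, Function.iterate_succ_apply']
  exact Strategy.valid _ _ _

lemma isHistFrom_iterate_step (σ : G.Profile) {v₀ v : V} {h : List V}
    (hh : G.IsHistFrom v₀ h v) (n : ℕ) :
    G.IsHistFrom v₀ ((G.step σ)^[n] (h, v)).1 ((G.step σ)^[n] (h, v)).2 := by
  induction n with
  | zero => exact hh
  | succ n ih =>
    rw [Function.iterate_succ_apply']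
    exact isHistFrom_snoc_iff.2 ⟨ih, Strategy.valid _ _ _⟩

lemma play_add (σ : G.Profile) (h : List V) (v : V) (n : ℕ) :
    (fun k => G.play σ h v (n + k)) =
      G.play σ ((G.step σ)^[n] (h, v)).1 ((G.step σ)^[n] (h, v)).2 := by
  funext k
  simp only [play, add_comm n k, Function.iterate_add_apply]

/-- The substrategy `s_{∥h}`. -/
def Strategy.shift (s : G.Strategy) (h : List V) : G.Strategy where
  toFun a v := s.toFun (h ++ a) v
  valid a v := s.valid (h ++ a) v

def Strategy.unshift (s : G.Strategy) (h : List V) : G.Strategy where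
  toFun a v := s.toFun (a.drop h.length) v
  valid a v := s.valid (a.drop h.length) v

lemma Strategy.shift_unshift (s : G.Strategy) (h : List V) : (s.unshift h).shift h = s := by
  cases s
  simp [Strategy.shift, Strategy.unshift]

def shiftProfile (σ : G.Profile) (h : List V) : G.Profile :=
  fun j => (σ j).shift h

lemma play_append (σ : G.Profile) (h a : List V) (v : V) :
    G.play σ (h ++ a) v = G.play (shiftProfile σ h) a v := by
  suffices ∀ n, (G.step σ)^[n] (h ++ a, v) =
      (h ++ ((G.step (shiftProfile σ h))^[n] (a, v)).1,
        ((G.step (shiftProfile σ h))^[n] (a, v)).2) by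
    funext n; simp only [play, this]
  intro n
  induction n with
  | zero => rfl
  | succ n ih =>
    simp only [Function.iterate_succ_apply', ih]
    simp [step, shiftProfile, Strategy.shift]

lemma PrefixIndependent.payoff_prependList (hpi : G.PrefixIndependent) {h : List V}
    (hh : List.IsChain G.E h) {ρ : ℕ → V} (hρ : G.IsPlay ρ) (i : P) :
    G.payoff i (prependList h ρ) = G.payoff i ρ := by
  rcases eq_or_ne h [] with rfl | hne
  · rfl
  · exact hpi h ρ ⟨hne, hh⟩ hρ i

lemma Consistent.mono {l l' : V → EReal} {ρ : ℕ → V} (hρ : G.Consistent l' ρ)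
    (hl : ∀ v, l v ≤ l' v) : G.Consistent l ρ :=
  fun n => (hl _).trans (hρ n)

def lamHat (σ : G.Profile) (v₀ : V) : V → EReal :=
  fun v => ⨅ (h : List V) (_ : G.IsHistFrom v₀ h v),
    (G.payoff (G.control v) (G.play σ h v) : EReal)

lemma consistent_lamHat (σ : G.Profile) {v₀ v : V} {h : List V} (hh : G.IsHistFrom v₀ h v) :
    G.Consistent (lamHat σ v₀) (G.play σ h v) := by
  intro n
  rw [play_add]
  exact iInf₂_le (α := EReal) ((G.step σ)^[n] (h, v)).1 (isHistFrom_iterate_step σ hh n)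

variable [DecidableEq P]

lemma shiftProfile_update (σ : G.Profile) (i : P) (s : G.Strategy) (h : List V) :
    shiftProfile (Function.update σ i s) h = Function.update (shiftProfile σ h) i (s.shift h) :=
  funext fun j => Function.apply_update (fun _ s => Strategy.shift s h) σ i s j

lemma IsEpsSPE.payoff_play_update_le (hpi : G.PrefixIndependent) {v₀ v : V} {ε : ℝ}
    {σ : G.Profile} (hσ : G.IsEpsSPE v₀ ε σ) {h : List V} (hh : G.IsHistFrom v₀ h v)
    (i : P) (s : G.Strategy) :
    G.payoff i (G.play (Function.update σ i s) h v) ≤ G.payoff i (G.play σ h v) + ε := by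
  simpa only [hpi.payoff_prependList hh.chain (isPlay_play _ _ _)] using hσ h v hh i s

lemma le_nego (l : V → EReal) (v : V) : l v ≤ G.nego l v := by
  refine le_iInf₂ fun τ ⟨s, hτ⟩ => ?_
  have hcompat : G.CompatExcept (G.control v) τ ([] ++ [v]) := by
    intro j _ k u w _ hw
    simp at hw
  have hconsistent := hτ [] v (isHistFrom_nil v) hcompat 0
  simp only [zero_add] at hconsistent
  exact hconsistent.trans (le_iSup (fun s' =>
    (G.payoff (G.control v) (G.play (Function.update τ (G.control v) s') [] v) : EReal)) s)

lemma shiftProfile_mem_lamRat (σ : G.Profile) {v₀ v : V} {h : List V}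
    (hh : G.IsHistFrom v₀ h v) (i : P) : shiftProfile σ h ∈ G.LamRat (lamHat σ v₀) i v := by
  refine ⟨shiftProfile σ h i, fun h' w hh' _ => ?_⟩
  rw [Function.update_eq_self, ← play_append]
  exact consistent_lamHat σ (hh.append hh')

lemma valAgainst_shiftProfile_le (hpi : G.PrefixIndependent) {v₀ v : V} {ε : ℝ}
    {σ : G.Profile} (hσ : G.IsEpsSPE v₀ ε σ) {h : List V} (hh : G.IsHistFrom v₀ h v)
    (i : P) :
    G.valAgainst i (shiftProfile σ h) v ≤ (G.payoff i (G.play σ h v) : EReal) + ε := by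
  refine iSup_le fun s => ?_
  have hplay := play_append (Function.update σ i (s.unshift h)) h [] v
  rw [List.append_nil, shiftProfile_update, Strategy.shift_unshift] at hplay
  have hdeviation := hσ.payoff_play_update_le hpi hh i (s.unshift h)
  rw [hplay] at hdeviation
  exact_mod_cast hdeviation

lemma nego_lamHat_le (hpi : G.PrefixIndependent) {v₀ : V} {ε : ℝ} {σ : G.Profile}
    (hσ : G.IsEpsSPE v₀ ε σ) (v : V) : G.nego (lamHat σ v₀) v ≤ lamHat σ v₀ v + ε := by
  rw [← EReal.sub_le_iff_le_add (.inl (EReal.coe_ne_bot ε)) (.inl (EReal.coe_ne_top ε))]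
  refine le_iInf₂ fun h hh => EReal.sub_le_of_le_add ?_
  exact (iInf₂_le _ (shiftProfile_mem_lamRat σ hh _)).trans
    (valAgainst_shiftProfile_le hpi hσ hh _)

lemma lamHat_isEFix (hpi : G.PrefixIndependent) {v₀ : V} {ε : ℝ} (hε : 0 ≤ ε)
    {σ : G.Profile} (hσ : G.IsEpsSPE v₀ ε σ) : G.IsEFix ε (lamHat σ v₀) := by
  refine fun v => ⟨?_, nego_lamHat_le hpi hσ v⟩
  exact (EReal.sub_le_of_le_add (le_add_of_nonneg_right (by exact_mod_cast hε))).trans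
    (le_nego _ v)

end GameStruct

open GameStruct in
theorem epsSPE_play_consistent_least_fixed_point_general
    {P V : Type} [DecidableEq P]
    (G : GameStruct P V) (hpi : G.PrefixIndependent)
    (ε : ℝ) (hε : 0 ≤ ε)
    (lstar : V → EReal)
    (hleast : ∀ l : V → EReal, G.IsEFix ε l → ∀ v, lstar v ≤ l v)
    (v₀ : V) (ξ : ℕ → V)
    (σ : G.Profile) (hσ : G.IsEpsSPE v₀ ε σ) (hout : G.play σ [] v₀ = ξ) :
    G.Consistent lstar ξ := by
  subst hout
  exact (consistent_lamHat σ (isHistFrom_nil v₀)).mono (hleast _ (lamHat_isEFix hpi hε hσ))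

open GameStruct in
/-- In an initialized prefix-independent game, every play supported by an
`ε`-SPE is consistent with the least `ε`-fixed point of the negotiation function. -/
theorem epsSPE_play_consistent_least_fixed_point
    {P V : Type} [Fintype P] [Fintype V] [DecidableEq P]
    (G : GameStruct P V) (hpi : G.PrefixIndependent)
    (ε : ℝ) (hε : 0 ≤ ε)
    (lstar : V → EReal) (hfix : G.IsEFix ε lstar)
    (hleast : ∀ l : V → EReal, G.IsEFix ε l → ∀ v, lstar v ≤ l v)
    (v₀ : V) (ξ : ℕ → V) (hξ : G.IsPlayFrom v₀ ξ)
    (σ : G.Profile) (hσ : G.IsEpsSPE v₀ ε σ) (hout : G.play σ [] v₀ = ξ) :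
    G.Consistent lstar ξ :=
  epsSPE_play_consistent_least_fixed_point_general G hpi ε hε lstar hleast v₀ ξ σ hσ hout
end
end

section
/- For every propositional formula φ = ⋀_{i=1}^n C_i in conjunctive normal form over a finite variable set X, the formula φ is satisfiable if and only if the mean-payoff game G^φ initialized at vertex C₁ admits an SPE σ̄ in which player P gets payoff 1, i.e. μ_P(⟨σ̄⟩_{C₁}) = 1. -/
/-!
If `ν` satisfies `φ`, let Prover pick a true literal in every clause and let every player `x`
with `ν x = true` answer a visit of `¬x` by moving to `⊥`. Prover then gets the maximal payoff `1`
except after such a refusal, which she cannot prevent. A player with `ν x = false` never enters a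
positive literal of `x` and gets `1`; a player with `ν x = true` either already gets `1` (at `¬x`)
or only moves at positive literals of `x`, where she has no choice. Hence nobody can profit from
deviating.

Conversely, in an SPE where Prover gets `1` the play never reaches `⊥`, and a player `x` whose
negative literal is visited already gets `1`, because moving to `⊥` there would give her `1`.
Declare `x` true iff player `x` gets less than `1`. A clause falsified by this valuation would be
left, at each of its visits, through a positive literal of a variable whose player gets `1`. Such
visits have density `1/(2n)`, whereas each of the finitely many variables of the clause loses
weight only on a set of density `0`.
-/

noncomputable section

open Filter

/-! The SAT reduction game `G^φ`. A CNF formula over the variable set `X` is given by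
its list of clauses, each clause being a list of literals `(x, b)` (`b = true` for the
positive literal `x`, `b = false` for `¬x`). -/

/-- Vertices of `G^φ`: one vertex per clause, one vertex per (clause, literal) pair,
and a sink vertex `⊥`. -/
inductive SatV (n : ℕ) (X : Type) where
  | cl : Fin n → SatV n X
  | lit : Fin n → X → Bool → SatV n X
  | sink : SatV n X

/-- Edges of `G^φ`. -/
def satE {n : ℕ} {X : Type} [DecidableEq X] (hn : 0 < n)
    (clauses : Fin n → List (X × Bool)) : SatV n X → SatV n X → Prop := fun u v =>
  match u, v with
  | .cl i, .lit j x b => j = i ∧ (x, b) ∈ clauses i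
  | .lit i _ _, .cl j => j = ⟨(i.val + 1) % n, Nat.mod_lt _ hn⟩
  | .lit _ _ b, .sink => b = false
  | .sink, .sink => True
  | _, _ => False

/-- Control: Prover (`none`) controls the clause vertices and the sink; the
variable player `x` controls every literal vertex of `x`. -/
def satCtrl {n : ℕ} {X : Type} : SatV n X → Option X := fun v =>
  match v with
  | .cl _ => none
  | .lit _ x _ => some x
  | .sink => none

/-- Weights of `G^φ`: Prover gets `0` on the sink self-loop and `1` elsewhere; the
player `x` gets `0` on every edge leading to a positive literal vertex of `x` and `1`
elsewhere. -/
def satW {n : ℕ} {X : Type} [DecidableEq X] :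
    Option X → SatV n X → SatV n X → ℚ := fun p u v =>
  match p with
  | none => match u, v with
    | .sink, .sink => 0
    | _, _ => 1
  | some x => match v with
    | .lit _ y true => if y = x then 0 else 1
    | _ => 1

section Cesaro

open Finset Topology

variable {u : ℕ → ℝ}

lemma cesaro_nonneg (hu : ∀ k, 0 ≤ u k) (N : ℕ) : 0 ≤ (∑ k ∈ range N, u k) / N :=
  div_nonneg (sum_nonneg fun k _ => hu k) N.cast_nonneg

lemma cesaro_le_one (hu : ∀ k, u k ≤ 1) (N : ℕ) : (∑ k ∈ range N, u k) / N ≤ 1 := by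
  rcases N.eq_zero_or_pos with rfl | hN
  · simp
  · rw [div_le_one (by exact_mod_cast hN)]
    simpa using sum_le_sum fun k (_ : k ∈ range N) => hu k

lemma liminf_cesaro_le_one (hu₀ : ∀ k, 0 ≤ u k) (hu₁ : ∀ k, u k ≤ 1) :
    liminf (fun N : ℕ => (∑ k ∈ range N, u k) / N) atTop ≤ 1 :=
  liminf_le_of_le (isBoundedUnder_of ⟨0, cesaro_nonneg hu₀⟩) fun _ hb =>
    let ⟨N, hN⟩ := hb.exists
    hN.trans (cesaro_le_one hu₁ N)

lemma tendsto_cesaro_one_sub_of_one_le_liminf (hu₀ : ∀ k, 0 ≤ u k) (hu₁ : ∀ k, u k ≤ 1)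
    (h : 1 ≤ liminf (fun N : ℕ => (∑ k ∈ range N, u k) / N) atTop) :
    Tendsto (fun N : ℕ => (∑ k ∈ range N, (1 - u k)) / N) atTop (𝓝 0) := by
  have hbdd : IsBoundedUnder (· ≥ ·) atTop fun N : ℕ => (∑ k ∈ range N, u k) / N :=
    isBoundedUnder_of ⟨0, cesaro_nonneg hu₀⟩
  have hlim : Tendsto (fun N : ℕ => (∑ k ∈ range N, u k) / N) atTop (𝓝 1) :=
    tendsto_of_le_liminf_of_limsup_le h
      (limsup_le_of_le hbdd.isCoboundedUnder_le (.of_forall (cesaro_le_one hu₁)))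
      (isBoundedUnder_of ⟨1, cesaro_le_one hu₁⟩) hbdd
  have hsub := (tendsto_const_nhds (x := (1 : ℝ))).sub hlim
  rw [sub_self] at hsub
  refine hsub.congr' ?_
  filter_upwards [eventually_ne_atTop 0] with N hN
  rw [sum_sub_distrib, sub_div]
  simp [hN]

lemma not_tendsto_cesaro_zero_of_periodic {d : ℕ → ℝ} (hd : ∀ k, 0 ≤ d k) {a p : ℕ}
    (hap : a < p) (hdp : ∀ m, 1 ≤ d (p * m + a)) :
    ¬ Tendsto (fun N : ℕ => (∑ k ∈ range N, d k) / N) atTop (𝓝 0) := by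
  intro h
  have hp : 0 < p := by omega
  have hsum : ∀ M : ℕ, (M : ℝ) ≤ ∑ k ∈ range (p * M), d k := by
    intro M
    induction M with
    | zero => simp
    | succ M ih =>
      have hblock : 1 ≤ ∑ k ∈ range p, d (p * M + k) :=
        (hdp M).trans (single_le_sum (fun k _ => hd _) (mem_range.2 hap))
      rw [Nat.mul_succ, sum_range_add]
      push_cast
      linarith
  have hmul : Tendsto (fun M : ℕ => p * M) atTop atTop :=
    tendsto_atTop_mono (fun M => Nat.le_mul_of_pos_left M hp) tendsto_id
  have hlow : ∀ᶠ M : ℕ in atTop, (1 / p : ℝ) ≤ (∑ k ∈ range (p * M), d k) / ↑(p * M) := by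
    filter_upwards [eventually_gt_atTop 0] with M hM
    have hpM : (0 : ℝ) < ↑(p * M) := by positivity
    rw [le_div_iff₀ hpM]
    push_cast
    rw [one_div, inv_mul_cancel_left₀ (by positivity)]
    exact hsum M
  have := ge_of_tendsto (h.comp hmul) hlow
  have : (0 : ℝ) < 1 / p := by positivity
  linarith

end Cesaro

section PrependList

variable {V : Type}

lemma prependList_nil (ρ : ℕ → V) : prependList [] ρ = ρ := by
  funext k
  simp [prependList]

lemma prependList_ofFn_shift (ρ : ℕ → V) (t : ℕ) :
    prependList (List.ofFn fun k : Fin t => ρ k) (fun k => ρ (t + k)) = ρ := by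
  funext m
  by_cases hm : m < t
  · simp [prependList, hm]
  · simp only [prependList, List.length_ofFn, hm, dite_false]
    congr 1
    omega

lemma eventually_prependList {Q : V → V → Prop} (h : List V) {ρ : ℕ → V}
    (hρ : ∀ᶠ k in atTop, Q (ρ k) (ρ (k + 1))) :
    ∀ᶠ k in atTop, Q (prependList h ρ k) (prependList h ρ (k + 1)) := by
  obtain ⟨N, hN⟩ := eventually_atTop.1 hρ
  refine eventually_atTop.2 ⟨h.length + N, fun k hk => ?_⟩
  have e : k + 1 - h.length = k - h.length + 1 := by omega
  simpa [prependList, show ¬ k < h.length by omega, show ¬ k + 1 < h.length by omega, e]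
    using hN (k - h.length) (by omega)

end PrependList

namespace GameStruct

variable {P V : Type} {G : GameStruct P V}

lemma play_succ (σ : G.Profile) (h : List V) (v : V) (m : ℕ) :
    G.play σ h v (m + 1) =
      (σ (G.control (G.play σ h v m))).toFun ((G.step σ)^[m] (h, v)).1 (G.play σ h v m) := by
  simp only [play, Function.iterate_succ_apply']
  rfl

lemma step_iterate_fst (σ : G.Profile) (h : List V) (v : V) (t : ℕ) :
    ((G.step σ)^[t] (h, v)).1 = h ++ List.ofFn fun k : Fin t => G.play σ h v k := by
  induction t with
  | zero => simp
  | succ t ih =>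
    rw [Function.iterate_succ_apply']
    change ((G.step σ)^[t] (h, v)).1 ++ [G.play σ h v t] = _
    rw [ih, List.ofFn_succ_last]
    simp

lemma play_shift (σ : G.Profile) (h : List V) (v : V) (t k : ℕ) :
    G.play σ ((G.step σ)^[t] (h, v)).1 (G.play σ h v t) k = G.play σ h v (t + k) := by
  simp only [play]
  rw [add_comm, Function.iterate_add_apply]

lemma IsPlay.eq_of_absorbing {ρ : ℕ → V} (hρ : G.IsPlay ρ) {s : V} (hs : ∀ w, G.E s w → w = s)
    {t m : ℕ} (ht : ρ t = s) (hm : t ≤ m) : ρ m = s := by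
  induction m, hm using Nat.le_induction with
  | base => exact ht
  | succ m _ ih => exact hs _ (ih ▸ hρ m)

def Strategy.ofMove (f : V → V) (hf : ∀ v, G.E v (f v)) : G.Strategy :=
  ⟨fun _ => f, fun _ => hf⟩

lemma play_ofMove (f : V → V) (hf : ∀ v, G.E v (f v)) (h : List V) (v : V) (m : ℕ) :
    G.play (fun _ => Strategy.ofMove f hf) h v m = f^[m] v := by
  induction m with
  | zero => rfl
  | succ m ih =>
    rw [play_succ, ih, Function.iterate_succ_apply']
    rfl

lemma isHistFrom_ofFn_play (σ : G.Profile) (v₀ : V) (t : ℕ) :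
    G.IsHistFrom v₀ (List.ofFn fun k : Fin t => G.play σ [] v₀ k) (G.play σ [] v₀ t) := by
  have hofn : (List.ofFn fun k : Fin t => G.play σ [] v₀ k) ++ [G.play σ [] v₀ t] =
      List.ofFn fun k : Fin (t + 1) => G.play σ [] v₀ k := by
    rw [List.ofFn_succ_last]
    simp
  refine ⟨?_, ?_⟩
  · rw [hofn]
    change List.IsChain _ _
    rw [List.isChain_iff_getElem]
    intro k hk
    simp only [List.getElem_ofFn]
    exact isPlay_play σ [] v₀ k
  · rw [hofn, List.ofFn_succ]
    rfl

open Classical in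
def Strategy.redirect (s : G.Strategy) (u w : V) (huw : G.E u w) : G.Strategy where
  toFun h v := if v = u then w else s.toFun h v
  valid h v := by
    split_ifs with hv
    · exact hv ▸ huw
    · exact s.valid h v

variable [DecidableEq P]

lemma play_update_redirect_one (σ : G.Profile) (s : G.Strategy) {i : P} {u w : V}
    (hu : G.control u = i) (huw : G.E u w) (h : List V) :
    G.play (Function.update σ i (s.redirect u w huw)) h u 1 = w := by
  rw [play_succ]
  simp [hu, Strategy.redirect, play]

lemma play_update_eq_of_subsingleton (σ : G.Profile) (i : P) (σ' : G.Strategy) (h : List V)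
    (v : V)
    (hforced : ∀ m, G.control (G.play σ h v m) = i → {w | G.E (G.play σ h v m) w}.Subsingleton) :
    G.play (Function.update σ i σ') h v = G.play σ h v := by
  suffices hstep : ∀ m, (G.step (Function.update σ i σ'))^[m] (h, v) = (G.step σ)^[m] (h, v) by
    funext m
    simp only [play, hstep]
  intro m
  induction m with
  | zero => rfl
  | succ m ih =>
    rw [Function.iterate_succ_apply', Function.iterate_succ_apply', ih]
    set p := (G.step σ)^[m] (h, v)
    have hp : p.2 = G.play σ h v m := rfl
    simp only [step, Prod.mk.injEq, true_and]
    by_cases hi : G.control p.2 = i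
    · rw [hi, Function.update_self]
      exact hforced m (hp ▸ hi) (hp ▸ σ'.valid p.1 p.2) (hp ▸ hi ▸ (σ i).valid p.1 p.2)
    · rw [Function.update_of_ne hi]

lemma IsEpsSPE.payoff_deviation_le {v₀ : V} {ε : ℝ} {σ : G.Profile} (hσ : G.IsEpsSPE v₀ ε σ)
    (t : ℕ) (i : P) (σ' : G.Strategy) :
    G.payoff i (prependList (List.ofFn fun k : Fin t => G.play σ [] v₀ k)
        (G.play (Function.update σ i σ') (List.ofFn fun k : Fin t => G.play σ [] v₀ k)
          (G.play σ [] v₀ t))) ≤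
      G.payoff i (G.play σ [] v₀) + ε := by
  have hrest : G.play σ (List.ofFn fun k : Fin t => G.play σ [] v₀ k) (G.play σ [] v₀ t) =
      fun k => G.play σ [] v₀ (t + k) := by
    funext k
    rw [← play_shift σ [] v₀ t k, step_iterate_fst, List.nil_append]
  have := hσ _ _ (isHistFrom_ofFn_play σ v₀ t) i σ'
  rwa [hrest, prependList_ofFn_shift] at this

end GameStruct

namespace GameStruct.IsMeanPayoff

open Finset Topology

variable {P V : Type} {G : GameStruct P V} {π : P → V → V → ℚ}

lemma payoff_eq_of_eventually (hmp : G.IsMeanPayoff π) {i : P} {ρ : ℕ → V} {c : ℚ}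
    (h : ∀ᶠ k in atTop, π i (ρ k) (ρ (k + 1)) = c) : G.payoff i ρ = c := by
  rw [hmp]
  refine Tendsto.liminf_eq ?_
  have hw : Tendsto (fun k => (π i (ρ k) (ρ (k + 1)) : ℝ)) atTop (𝓝 c) :=
    tendsto_const_nhds.congr' (h.mono fun k hk => by simp only [hk])
  simpa only [div_eq_inv_mul] using hw.cesaro

lemma payoff_prependList_eq_of_eventually (hmp : G.IsMeanPayoff π) {i : P} {ρ : ℕ → V} {c : ℚ}
    (h : ∀ᶠ k in atTop, π i (ρ k) (ρ (k + 1)) = c) (H : List V) :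
    G.payoff i (prependList H ρ) = c :=
  hmp.payoff_eq_of_eventually (eventually_prependList (Q := fun u w => π i u w = c) H h)

lemma payoff_le_one (hmp : G.IsMeanPayoff π) {i : P} (hπ : ∀ u v, 0 ≤ π i u v ∧ π i u v ≤ 1)
    (ρ : ℕ → V) : G.payoff i ρ ≤ 1 := by
  rw [hmp]
  exact liminf_cesaro_le_one (fun k => by exact_mod_cast (hπ _ _).1)
    (fun k => by exact_mod_cast (hπ _ _).2)

lemma tendsto_cesaro_one_sub (hmp : G.IsMeanPayoff π) {i : P}
    (hπ : ∀ u v, 0 ≤ π i u v ∧ π i u v ≤ 1) {ρ : ℕ → V} (h : 1 ≤ G.payoff i ρ) :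
    Tendsto (fun N : ℕ => (∑ k ∈ range N, (1 - (π i (ρ k) (ρ (k + 1)) : ℝ))) / N) atTop (𝓝 0) :=
  tendsto_cesaro_one_sub_of_one_le_liminf (fun k => by exact_mod_cast (hπ _ _).1)
    (fun k => by exact_mod_cast (hπ _ _).2) (hmp i ρ ▸ h)

end GameStruct.IsMeanPayoff

section AssignmentMove

variable {n : ℕ} {hn : 0 < n} {X : Type}

def assignmentMove (hn : 0 < n) (ν : X → Bool) (c : Fin n → X × Bool) : SatV n X → SatV n X
  | .cl i => .lit i (c i).1 (c i).2
  | .lit i x b => if b = false ∧ ν x = true then .sink else .cl ⟨(i.1 + 1) % n, Nat.mod_lt _ hn⟩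
  | .sink => .sink

def HeadsToSink (ν : X → Bool) : SatV n X → Prop
  | .lit _ x false => ν x = true
  | .sink => True
  | _ => False

variable {ν : X → Bool} {c : Fin n → X × Bool}

lemma iterate_assignmentMove_of_headsToSink {v : SatV n X} (hv : HeadsToSink ν v) (m : ℕ) :
    (assignmentMove hn ν c)^[m + 1] v = .sink := by
  have hsink : assignmentMove hn ν c v = .sink := by
    rcases v with _ | ⟨_, x, _ | _⟩ | _ <;> simp_all [HeadsToSink, assignmentMove]
  rw [Function.iterate_succ_apply, hsink]
  exact Function.iterate_fixed rfl m

lemma eq_of_assignmentMove_eq_lit (hν : ∀ i, ν (c i).1 = (c i).2) {u : SatV n X} {j : Fin n}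
    {y : X} {b : Bool} (h : assignmentMove hn ν c u = .lit j y b) : ν y = b := by
  rcases u with i | ⟨i, x, b'⟩ | _
  · simp only [assignmentMove, SatV.lit.injEq] at h
    obtain ⟨-, rfl, rfl⟩ := h
    exact hν i
  · by_cases hb : b' = false ∧ ν x = true <;> simp [assignmentMove, hb] at h
  · simp [assignmentMove] at h

lemma not_headsToSink_iterate (hν : ∀ i, ν (c i).1 = (c i).2) {v : SatV n X}
    (hv : ¬ HeadsToSink ν v) (m : ℕ) : ¬ HeadsToSink ν ((assignmentMove hn ν c)^[m] v) := by
  induction m with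
  | zero => exact hv
  | succ m ih =>
    rw [Function.iterate_succ_apply']
    generalize hu : (assignmentMove hn ν c)^[m] v = u at ih
    generalize hw : assignmentMove hn ν c u = w
    rcases w with _ | ⟨j, y, _ | _⟩ | _
    · simp [HeadsToSink]
    · simp [HeadsToSink, eq_of_assignmentMove_eq_lit hν hw]
    · simp [HeadsToSink]
    · rcases u with _ | ⟨_, x, _ | _⟩ | _ <;> simp_all [HeadsToSink, assignmentMove]

end AssignmentMove

section SatGame

variable {n : ℕ} {hn : 0 < n} {X : Type} [DecidableEq X] {clauses : Fin n → List (X × Bool)}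

lemma satE_sink {w : SatV n X} (h : satE hn clauses .sink w) : w = .sink := by
  cases w <;> simp_all [satE]

lemma satE_cl {i : Fin n} {w : SatV n X} (h : satE hn clauses (.cl i) w) :
    ∃ x b, w = .lit i x b ∧ (x, b) ∈ clauses i := by
  cases w with
  | lit j x b =>
    obtain ⟨rfl, hm⟩ := h
    exact ⟨x, b, rfl, hm⟩
  | _ => simp [satE] at h

lemma satE_lit {i : Fin n} {x : X} {b : Bool} {w : SatV n X}
    (h : satE hn clauses (.lit i x b) w) :
    w = .cl ⟨(i.1 + 1) % n, Nat.mod_lt _ hn⟩ ∨ (w = .sink ∧ b = false) := by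
  cases w with
  | cl j => exact .inl (by rw [h])
  | lit => simp [satE] at h
  | sink => exact .inr ⟨rfl, h⟩

lemma subsingleton_satE_sink : {w : SatV n X | satE hn clauses .sink w}.Subsingleton := by
  intro w (hw : satE hn clauses .sink w) w' (hw' : satE hn clauses .sink w')
  exact (satE_sink hw).trans (satE_sink hw').symm

lemma subsingleton_satE_lit_true (i : Fin n) (x : X) :
    {w | satE hn clauses (.lit i x true) w}.Subsingleton := by
  intro w (hw : satE hn clauses _ w) w' (hw' : satE hn clauses _ w')
  rcases satE_lit hw with hw | ⟨_, ⟨⟩⟩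
  rcases satE_lit hw' with hw' | ⟨_, ⟨⟩⟩
  rw [hw, hw']

lemma satW_mem_Icc (p : Option X) (u v : SatV n X) : 0 ≤ satW p u v ∧ satW p u v ≤ 1 := by
  rcases p with _ | x
  · cases u <;> cases v <;> simp [satW]
  · cases v with
    | lit j y b =>
      cases b
      · simp [satW]
      · by_cases hxy : y = x <;> simp [satW, hxy]
    | _ => simp [satW]

lemma satW_none_of_ne_sink {u : SatV n X} (hu : u ≠ .sink) (v : SatV n X) :
    satW none u v = 1 := by
  cases u <;> cases v <;> simp_all [satW]

lemma satW_some_of_ne_lit_true {x : X} (u : SatV n X) {v : SatV n X}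
    (hv : ∀ j, v ≠ .lit j x true) : satW (some x) u v = 1 := by
  cases v with
  | lit j y b =>
    cases b
    · simp [satW]
    · have : y ≠ x := fun hyx => hv j (by rw [hyx])
      simp [satW, this]
  | _ => simp [satW]

variable {ν : X → Bool} {c : Fin n → X × Bool}

lemma assignmentMove_valid (hmem : ∀ i, c i ∈ clauses i) (v : SatV n X) :
    satE hn clauses v (assignmentMove hn ν c v) := by
  cases v with
  | cl i => exact ⟨rfl, hmem i⟩
  | lit i x b =>
    by_cases hb : b = false ∧ ν x = true
    · simp only [assignmentMove, if_pos hb]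
      exact hb.1
    · simp only [assignmentMove, if_neg hb]
      exact rfl
  | sink => trivial

end SatGame

section AssignmentProfile

open GameStruct

variable {n : ℕ} {hn : 0 < n} {X : Type} [DecidableEq X] {clauses : Fin n → List (X × Bool)}
  {G : GameStruct (Option X) (SatV n X)} {ν : X → Bool} {c : Fin n → X × Bool}

def assignmentProfile (hE : G.E = satE hn clauses) (ν : X → Bool) (c : Fin n → X × Bool)
    (hmem : ∀ i, c i ∈ clauses i) : G.Profile :=
  fun _ => .ofMove (assignmentMove hn ν c) fun v => hE ▸ assignmentMove_valid hmem v

lemma play_assignmentProfile (hE : G.E = satE hn clauses) (hmem : ∀ i, c i ∈ clauses i)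
    (h : List (SatV n X)) (v : SatV n X) :
    G.play (assignmentProfile hE ν c hmem) h v = fun m => (assignmentMove hn ν c)^[m] v :=
  funext (play_ofMove _ _ h v)

lemma payoff_none_assignmentProfile (hE : G.E = satE hn clauses) (hmem : ∀ i, c i ∈ clauses i)
    (hν : ∀ i, ν (c i).1 = (c i).2) (hmp : G.IsMeanPayoff satW) {v : SatV n X}
    (hv : ¬ HeadsToSink ν v) (h : List (SatV n X)) :
    G.payoff none (prependList h (G.play (assignmentProfile hE ν c hmem) h v)) = 1 := by
  rw [play_assignmentProfile]
  refine (hmp.payoff_prependList_eq_of_eventually (.of_forall fun k => ?_) h).trans Rat.cast_one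
  refine satW_none_of_ne_sink (fun hk => ?_) _
  exact not_headsToSink_iterate hν hv k (by rw [hk]; trivial)

lemma payoff_some_assignmentProfile (hE : G.E = satE hn clauses) (hmem : ∀ i, c i ∈ clauses i)
    (hmp : G.IsMeanPayoff satW) {x : X} {v : SatV n X}
    (hv : ∀ k j, (assignmentMove hn ν c)^[k + 1] v ≠ .lit j x true) (h : List (SatV n X)) :
    G.payoff (some x) (prependList h (G.play (assignmentProfile hE ν c hmem) h v)) = 1 := by
  rw [play_assignmentProfile]
  exact (hmp.payoff_prependList_eq_of_eventually
    (.of_forall fun k => satW_some_of_ne_lit_true _ (hv k)) h).trans Rat.cast_one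

lemma play_update_none_assignmentProfile (hE : G.E = satE hn clauses)
    (hc : G.control = satCtrl) (hmem : ∀ i, c i ∈ clauses i) {v : SatV n X}
    (hv : HeadsToSink ν v) (h : List (SatV n X)) (σ' : G.Strategy) :
    G.play (Function.update (assignmentProfile hE ν c hmem) none σ') h v =
      G.play (assignmentProfile hE ν c hmem) h v := by
  refine play_update_eq_of_subsingleton _ _ _ _ _ fun m hm => ?_
  simp only [play_assignmentProfile] at hm ⊢
  suffices hsink : (assignmentMove hn ν c)^[m] v = .sink by
    rw [hsink, hE]
    exact subsingleton_satE_sink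
  cases m with
  | zero => rcases v with _ | _ | _ <;> simp_all [HeadsToSink, satCtrl]
  | succ m => exact iterate_assignmentMove_of_headsToSink hv m

lemma play_update_some_assignmentProfile (hE : G.E = satE hn clauses)
    (hc : G.control = satCtrl) (hmem : ∀ i, c i ∈ clauses i) (hν : ∀ i, ν (c i).1 = (c i).2)
    {x : X} (hx : ν x = true) {v : SatV n X} (hv : ∀ j, v ≠ .lit j x false)
    (h : List (SatV n X)) (σ' : G.Strategy) :
    G.play (Function.update (assignmentProfile hE ν c hmem) (some x) σ') h v =
      G.play (assignmentProfile hE ν c hmem) h v := by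
  refine play_update_eq_of_subsingleton _ _ _ _ _ fun m hm => ?_
  simp only [play_assignmentProfile] at hm ⊢
  obtain ⟨j, hj⟩ : ∃ j, (assignmentMove hn ν c)^[m] v = .lit j x true := by
    generalize hu : (assignmentMove hn ν c)^[m] v = u at hm
    rcases u with _ | ⟨j, y, b⟩ | _ <;> simp only [hc, satCtrl, reduceCtorEq,
      Option.some.injEq] at hm
    subst hm
    refine ⟨j, ?_⟩
    cases m with
    | zero =>
      cases b
      · exact absurd hu (hv j)
      · rfl
    | succ m =>
      rw [Function.iterate_succ_apply'] at hu
      rw [← eq_of_assignmentMove_eq_lit hν hu, hx]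
  rw [hj, hE]
  exact subsingleton_satE_lit_true j x

lemma isEpsSPE_assignmentProfile (hE : G.E = satE hn clauses) (hc : G.control = satCtrl)
    (hmem : ∀ i, c i ∈ clauses i) (hν : ∀ i, ν (c i).1 = (c i).2) (hmp : G.IsMeanPayoff satW) :
    G.IsEpsSPE (.cl ⟨0, hn⟩) 0 (assignmentProfile hE ν c hmem) := by
  intro h v _ i σ'
  rw [add_zero]
  have hle := hmp.payoff_le_one (satW_mem_Icc i)
  rcases i with _ | x
  · by_cases hv : HeadsToSink ν v
    · rw [play_update_none_assignmentProfile hE hc hmem hv]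
    · rw [payoff_none_assignmentProfile hE hmem hν hmp hv]
      exact hle _
  · cases hx : ν x
    · refine (payoff_some_assignmentProfile hE hmem hmp (fun k j hk => ?_) h).symm ▸ hle _
      rw [Function.iterate_succ_apply'] at hk
      simpa [hx] using eq_of_assignmentMove_eq_lit hν hk
    · by_cases hv : ∃ j, v = .lit j x false
      · obtain ⟨j, rfl⟩ := hv
        refine (payoff_some_assignmentProfile hE hmem hmp (fun k j' => ?_) h).symm ▸ hle _
        rw [iterate_assignmentMove_of_headsToSink (by exact hx)]
        simp
      · push Not at hv
        rw [play_update_some_assignmentProfile hE hc hmem hν hx hv]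

end AssignmentProfile

section Satisfiability

open GameStruct Finset Topology

variable {n : ℕ} {hn : 0 < n} {X : Type} [DecidableEq X] {clauses : Fin n → List (X × Bool)}
  {G : GameStruct (Option X) (SatV n X)}

lemma ne_sink_of_payoff_none_eq_one (hE : G.E = satE hn clauses) (hmp : G.IsMeanPayoff satW)
    {ρ : ℕ → SatV n X} (hρ : G.IsPlay ρ) (h : G.payoff none ρ = 1) (t : ℕ) : ρ t ≠ .sink := by
  intro ht
  have hsink : ∀ m, t ≤ m → ρ m = .sink := fun m hm =>
    hρ.eq_of_absorbing (fun w hw => satE_sink (hE ▸ hw)) ht hm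
  have h0 : G.payoff none ρ = 0 :=
    (hmp.payoff_eq_of_eventually (eventually_atTop.2 ⟨t, fun m hm => by
      rw [hsink m hm, hsink (m + 1) (by omega)]; rfl⟩)).trans Rat.cast_zero
  exact zero_ne_one (h0.symm.trans h)

lemma eq_cl_two_mul_of_satE_chain {ρ : ℕ → SatV n X} (hρ : ∀ k, satE hn clauses (ρ k) (ρ (k + 1)))
    (hρ₀ : ρ 0 = .cl ⟨0, hn⟩) (hsink : ∀ k, ρ k ≠ .sink) (m : ℕ) :
    ρ (2 * m) = .cl ⟨m % n, Nat.mod_lt _ hn⟩ := by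
  induction m with
  | zero => simpa using hρ₀
  | succ m ih =>
    obtain ⟨x, b, hlit, -⟩ := satE_cl (ih ▸ hρ (2 * m))
    rcases satE_lit (hlit ▸ hρ (2 * m + 1)) with hcl | ⟨hs, -⟩
    · rw [show 2 * (m + 1) = 2 * m + 1 + 1 by ring, hcl]
      congr 2
      rw [Nat.add_mod, Nat.mod_mod, ← Nat.add_mod]
    · exact absurd hs (hsink _)

lemma exists_satisfied_literal (hmp : G.IsMeanPayoff satW) {ρ : ℕ → SatV n X}
    (hρ : ∀ k, satE hn clauses (ρ k) (ρ (k + 1))) (hρ₀ : ρ 0 = .cl ⟨0, hn⟩)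
    (hsink : ∀ k, ρ k ≠ .sink)
    (hneg : ∀ t j x, ρ t = .lit j x false → 1 ≤ G.payoff (some x) ρ) (i : Fin n) :
    ∃ l ∈ clauses i, decide (G.payoff (some l.1) ρ < 1) = l.2 := by
  by_contra hcon
  push Not at hcon
  set S := (clauses i).toFinset.filter fun l => l.2 = true
  have hS : ∀ l ∈ S, 1 ≤ G.payoff (some l.1) ρ := by
    intro l hl
    simp only [S, mem_filter, List.mem_toFinset] at hl
    simpa [hl.2] using hcon l hl.1
  have hvisit : ∀ m, ∃ l ∈ S, ρ (2 * n * m + 2 * i + 1) = .lit i l.1 true := by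
    intro m
    have hi : (⟨(n * m + i) % n, Nat.mod_lt _ hn⟩ : Fin n) = i :=
      Fin.ext (by simp [Nat.mod_eq_of_lt i.isLt])
    obtain ⟨x, b, hlit, hmem⟩ := satE_cl (eq_cl_two_mul_of_satE_chain hρ hρ₀ hsink (n * m + i) ▸ hρ _)
    rw [hi] at hlit hmem
    rw [show 2 * n * m + 2 * i + 1 = 2 * (n * m + i) + 1 by ring, hlit]
    cases b
    · exact absurd (hneg _ _ _ hlit) (by simpa using hcon _ hmem)
    · exact ⟨(x, true), by simp [S, hmem], rfl⟩
  set d : ℕ → ℝ := fun k => ∑ l ∈ S, (1 - (satW (some l.1) (ρ k) (ρ (k + 1)) : ℝ))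
  have hd₀ : ∀ k, 0 ≤ d k := fun k => sum_nonneg fun l _ =>
    sub_nonneg.2 (by exact_mod_cast (satW_mem_Icc _ _ _).2)
  have hd₁ : ∀ m, 1 ≤ d (2 * n * m + 2 * i) := by
    intro m
    obtain ⟨l, hl, hlit⟩ := hvisit m
    refine le_of_eq_of_le ?_ (single_le_sum (fun l _ => sub_nonneg.2 ?_) hl)
    · simp [hlit, satW]
    · exact_mod_cast (satW_mem_Icc _ _ _).2
  have htend : Tendsto (fun N : ℕ => (∑ k ∈ range N, d k) / N) atTop (𝓝 0) := by
    have := tendsto_finsetSum S fun l hl => hmp.tendsto_cesaro_one_sub (satW_mem_Icc _) (hS l hl)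
    rw [sum_const_zero] at this
    refine this.congr fun N => ?_
    simp only [d, ← sum_div]
    rw [sum_comm]
  exact not_tendsto_cesaro_zero_of_periodic hd₀ (by omega) hd₁ htend

lemma one_le_payoff_of_play_eq_lit_false (hE : G.E = satE hn clauses) (hc : G.control = satCtrl)
    (hmp : G.IsMeanPayoff satW) {σ : G.Profile} {v₀ : SatV n X} (hσ : G.IsEpsSPE v₀ 0 σ)
    {t : ℕ} {j : Fin n} {x : X} (ht : G.play σ [] v₀ t = .lit j x false) :
    1 ≤ G.payoff (some x) (G.play σ [] v₀) := by
  have hedge : G.E (G.play σ [] v₀ t) .sink := by rw [hE, ht]; rfl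
  have hctrl : G.control (G.play σ [] v₀ t) = some x := by rw [hc, ht]; rfl
  set H := List.ofFn fun k : Fin t => G.play σ [] v₀ k
  set τ := (σ (some x)).redirect _ _ hedge
  have hsink : ∀ k, G.play (Function.update σ (some x) τ) H (G.play σ [] v₀ t) (k + 1) = .sink :=
    fun k => (isPlay_play _ H _).eq_of_absorbing (fun w hw => satE_sink (hE ▸ hw))
      (play_update_redirect_one σ _ hctrl hedge H) (by omega)
  have hdev := hσ.payoff_deviation_le t (some x) τ
  rw [(hmp.payoff_prependList_eq_of_eventually (.of_forall fun k => by
    rw [hsink k]; exact satW_some_of_ne_lit_true _ fun _ => by simp) H).trans Rat.cast_one]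
    at hdev
  linarith

end Satisfiability

open GameStruct in
theorem sat_iff_SPE_with_payoff_one_general
    {n : ℕ} (hn : 0 < n) {X : Type} [DecidableEq X]
    (clauses : Fin n → List (X × Bool))
    (G : GameStruct (Option X) (SatV n X))
    (hE : G.E = satE hn clauses) (hc : G.control = satCtrl)
    (hmp : G.IsMeanPayoff satW) :
    (∃ ν : X → Bool, ∀ i, ∃ lit ∈ clauses i, ν lit.1 = lit.2) ↔
      ∃ σ : G.Profile, G.IsEpsSPE (SatV.cl ⟨0, hn⟩) 0 σ ∧
        G.payoff none (G.play σ [] (SatV.cl ⟨0, hn⟩)) = 1 := by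
  constructor
  · rintro ⟨ν, hsat⟩
    choose c hmem hν using hsat
    refine ⟨assignmentProfile hE ν c hmem, isEpsSPE_assignmentProfile hE hc hmem hν hmp, ?_⟩
    simpa [prependList_nil] using
      payoff_none_assignmentProfile hE hmem hν hmp (v := .cl ⟨0, hn⟩) (by simp [HeadsToSink]) []
  · rintro ⟨σ, hσ, hpay⟩
    have hρ : ∀ k, satE hn clauses (G.play σ [] (.cl ⟨0, hn⟩) k)
        (G.play σ [] (.cl ⟨0, hn⟩) (k + 1)) := fun k => hE ▸ isPlay_play σ [] _ k
    exact ⟨fun x => decide (G.payoff (some x) (G.play σ [] (.cl ⟨0, hn⟩)) < 1),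
      exists_satisfied_literal hmp hρ rfl
        (ne_sink_of_payoff_none_eq_one hE hmp (isPlay_play σ [] _) hpay)
        fun _ _ _ ht => one_le_payoff_of_play_eq_lit_false hE hc hmp hσ ht⟩

open GameStruct in
/-- A CNF formula `φ` is satisfiable iff the mean-payoff game `G^φ`,
initialized at the first clause vertex, admits an SPE in which Prover gets payoff 1. -/
theorem sat_iff_SPE_with_payoff_one
    {n : ℕ} (hn : 0 < n) {X : Type} [Fintype X] [DecidableEq X]
    (clauses : Fin n → List (X × Bool)) (hcl : ∀ i, clauses i ≠ [])
    (G : GameStruct (Option X) (SatV n X))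
    (hE : G.E = satE hn clauses) (hc : G.control = satCtrl)
    (hmp : G.IsMeanPayoff satW) :
    (∃ ν : X → Bool, ∀ i, ∃ lit ∈ clauses i, ν lit.1 = lit.2) ↔
      ∃ σ : G.Profile, G.IsEpsSPE (SatV.cl ⟨0, hn⟩) 0 σ ∧
        G.payoff none (G.play σ [] (SatV.cl ⟨0, hn⟩)) = 1 :=
  sat_iff_SPE_with_payoff_one_general hn clauses G hE hc hmp
end
end
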